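/- The set {(c, e, h) ∈ ℝ³ × ℝ³ × ℝ : c·e = 0, ‖e‖² − h‖c‖² = 1} is homeomorphic to ℝ × S² × S². -/

import Mathlib

noncomputable abbrev E3 := EuclideanSpace ℝ (Fin 3)

/-- The rescaled model of the space of all Keplerian orbits. -/
def H' : Set (E3 × E3 × ℝ) :=
  {x | inner ℝ x.1 x.2.1 = (0 : ℝ) ∧ ‖x.2.1‖ ^ 2 - x.2.2 * ‖x.1‖ ^ 2 = 1}

noncomputable section
namespace Stmt10

def tA (k t : ℝ) : ℝ := 1 - t - k * (1 + t)

def tS (k t : ℝ) : ℝ := tA k t + Real.sqrt ((tA k t) ^ 2 + 4 * (1 + t) ^ 2)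

lemma tS_pos (k t : ℝ) (ht : -1 ≤ t) : 0 < tS k t := by
  rcases eq_or_lt_of_le ht with h1 | h1
  · have hA : tA k t = 2 := by rw [tA, ← h1]; ring
    have h4 : (tA k t) ^ 2 + 4 * (1 + t) ^ 2 = 4 := by rw [hA, ← h1]; ring
    rw [tS, h4, hA, show (4:ℝ) = 2 ^ 2 by norm_num, Real.sqrt_sq (by norm_num)]
    norm_num
  · have h2 : (tA k t) ^ 2 < (tA k t) ^ 2 + 4 * (1 + t) ^ 2 := by nlinarith
    have h3 : |tA k t| < Real.sqrt ((tA k t) ^ 2 + 4 * (1 + t) ^ 2) := by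
      rw [← Real.sqrt_sq_eq_abs]
      exact Real.sqrt_lt_sqrt (sq_nonneg _) h2
    have h5 := neg_abs_le (tA k t)
    rw [tS]; linarith

lemma tS_sq (k t : ℝ) :
    (tS k t) ^ 2 = 2 * tA k t * tS k t + 4 * (1 + t) ^ 2 := by
  have hB : (Real.sqrt ((tA k t) ^ 2 + 4 * (1 + t) ^ 2)) ^ 2
      = (tA k t) ^ 2 + 4 * (1 + t) ^ 2 := Real.sq_sqrt (by positivity)
  rw [tS]; nlinarith [hB]

lemma tS_eval {h cx ex N2 : ℝ} (hN2 : N2 = cx + ex) (hpos : 0 < N2)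
    (hcon : ex - h * cx = 1) :
    tS (h + cx) ((cx - ex) / N2) = 4 / N2 := by
  subst hN2
  have hne : cx + ex ≠ 0 := hpos.ne'
  have hA : tA (h + cx) ((cx - ex) / (cx + ex)) = 2 * (1 - cx ^ 2) / (cx + ex) := by
    rw [tA]; field_simp; linear_combination 2 * hcon
  have harg : (tA (h + cx) ((cx - ex) / (cx + ex))) ^ 2
      + 4 * (1 + (cx - ex) / (cx + ex)) ^ 2
      = (2 * (1 + cx ^ 2) / (cx + ex)) ^ 2 := by
    rw [hA]; field_simp; ring
  rw [tS, harg, Real.sqrt_sq (by positivity), hA]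
  field_simp; ring

lemma aux1 {k t s : ℝ} (hs : s ≠ 0) : k - 2 * (1 + t) / s + s⁻¹ * (2 + 2 * t) = k := by
  field_simp
  ring

lemma unit_smul {a : ℝ} (ha : 0 < a) {p : E3} (hp : ‖p‖ = 1) :
    ‖a • p‖⁻¹ • (a • p) = p := by
  rw [norm_smul, Real.norm_eq_abs, abs_of_pos ha, hp, mul_one, smul_smul,
    inv_mul_cancel₀ ha.ne', one_smul]

lemma norm_add_sq3 {c e : E3} (hce : (inner ℝ c e : ℝ) = 0) :
    ‖c + e‖ ^ 2 = ‖c‖ ^ 2 + ‖e‖ ^ 2 := by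
  rw [norm_add_sq_real, hce]; ring

lemma norm_sub_sq3 {c e : E3} (hce : (inner ℝ c e : ℝ) = 0) :
    ‖c - e‖ ^ 2 = ‖c‖ ^ 2 + ‖e‖ ^ 2 := by
  rw [norm_sub_sq_real, hce]; ring

section mem

variable {x : E3 × E3 × ℝ}

lemma norm_add_sq' (hx : x ∈ H') :
    ‖x.1 + x.2.1‖ ^ 2 = ‖x.1‖ ^ 2 + ‖x.2.1‖ ^ 2 := by
  rw [norm_add_sq_real, hx.1]; ring

lemma norm_sub_sq' (hx : x ∈ H') :
    ‖x.1 - x.2.1‖ ^ 2 = ‖x.1‖ ^ 2 + ‖x.2.1‖ ^ 2 := by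
  rw [norm_sub_sq_real, hx.1]; ring

lemma rpos (hx : x ∈ H') : 0 < ‖x.1‖ ^ 2 + ‖x.2.1‖ ^ 2 := by
  have h2 := hx.2
  have hc := sq_nonneg ‖x.1‖
  have he := sq_nonneg ‖x.2.1‖
  rcases lt_or_ge 0 (‖x.1‖ ^ 2 + ‖x.2.1‖ ^ 2) with h | h
  · exact h
  · exfalso
    have hc0 : ‖x.1‖ ^ 2 = 0 := by linarith
    have he0 : ‖x.2.1‖ ^ 2 = 0 := by linarith
    rw [hc0, he0] at h2; simp at h2

lemma add_ne (hx : x ∈ H') : x.1 + x.2.1 ≠ 0 := by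
  intro h
  have h1 := norm_add_sq' hx
  rw [h] at h1; simp at h1
  have := rpos hx; rw [← h1] at this; simp at this

lemma sub_ne (hx : x ∈ H') : x.1 - x.2.1 ≠ 0 := by
  intro h
  have h1 := norm_sub_sq' hx
  rw [h] at h1; simp at h1
  have := rpos hx; rw [← h1] at this; simp at this

lemma Fm_fst_mem (hx : x ∈ H') :
    ‖x.1 + x.2.1‖⁻¹ • (x.1 + x.2.1) ∈ Metric.sphere (0 : E3) 1 := by
  rw [mem_sphere_zero_iff_norm]
  exact norm_smul_inv_norm (add_ne hx)

lemma Fm_snd_mem (hx : x ∈ H') :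
    ‖x.1 - x.2.1‖⁻¹ • (x.1 - x.2.1) ∈ Metric.sphere (0 : E3) 1 := by
  rw [mem_sphere_zero_iff_norm]
  exact norm_smul_inv_norm (sub_ne hx)

end mem

/-- inverse map (underlying) -/
def Gm (y : ℝ × E3 × E3) : E3 × E3 × ℝ :=
  ((Real.sqrt (tS y.1 (inner ℝ y.2.1 y.2.2)))⁻¹ • (y.2.1 + y.2.2),
   (Real.sqrt (tS y.1 (inner ℝ y.2.1 y.2.2)))⁻¹ • (y.2.1 - y.2.2),
   y.1 - 2 * (1 + (inner ℝ y.2.1 y.2.2 : ℝ)) / tS y.1 (inner ℝ y.2.1 y.2.2))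

lemma t_ge {p q : E3} (hp : ‖p‖ = 1) (hq : ‖q‖ = 1) : -1 ≤ (inner ℝ p q : ℝ) := by
  have h1 := abs_real_inner_le_norm p q
  rw [hp, hq] at h1
  have h2 := neg_abs_le (inner ℝ p q : ℝ)
  linarith

lemma Gm_mem {k : ℝ} {p q : E3} (hp : ‖p‖ = 1) (hq : ‖q‖ = 1) :
    Gm (k, p, q) ∈ H' := by
  set t : ℝ := inner ℝ p q with htdef
  have ht : -1 ≤ t := t_ge hp hq
  have hs : 0 < tS k t := tS_pos k t ht
  have hsq : 0 < Real.sqrt (tS k t) := Real.sqrt_pos.mpr hs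
  have hss : (Real.sqrt (tS k t))⁻¹ ^ 2 = (tS k t)⁻¹ := by
    rw [inv_pow, Real.sq_sqrt hs.le]
  constructor
  · show (inner ℝ ((Real.sqrt (tS k t))⁻¹ • (p + q)) ((Real.sqrt (tS k t))⁻¹ • (p - q)) : ℝ) = 0
    rw [real_inner_smul_left, real_inner_smul_right]
    have : (inner ℝ (p + q) (p - q) : ℝ) = 0 := by
      rw [inner_sub_right, inner_add_left, inner_add_left,
        real_inner_self_eq_norm_sq, real_inner_self_eq_norm_sq, hp, hq,
        real_inner_comm q p]
      ring
    rw [this]; ring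
  · show ‖(Real.sqrt (tS k t))⁻¹ • (p - q)‖ ^ 2 -
      (k - 2 * (1 + t) / tS k t) * ‖(Real.sqrt (tS k t))⁻¹ • (p + q)‖ ^ 2 = 1
    rw [norm_smul, norm_smul, mul_pow, mul_pow, Real.norm_eq_abs,
      abs_of_nonneg (by positivity), hss]
    have h1 : ‖p - q‖ ^ 2 = 2 - 2 * t := by
      rw [norm_sub_sq_real, hp, hq, htdef]; ring
    have h2 : ‖p + q‖ ^ 2 = 2 + 2 * t := by
      rw [norm_add_sq_real, hp, hq, htdef]; ring
    rw [h1, h2]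
    have hsq2 := tS_sq k t
    have hA : tA k t = 1 - t - k * (1 + t) := rfl
    field_simp
    nlinarith [hsq2]

/-- forward map -/
def F (x : H') : ℝ × Metric.sphere (0 : E3) 1 × Metric.sphere (0 : E3) 1 :=
  ((x : E3 × E3 × ℝ).2.2 + ‖(x : E3 × E3 × ℝ).1‖ ^ 2,
   ⟨_, Fm_fst_mem x.2⟩, ⟨_, Fm_snd_mem x.2⟩)

/-- inverse map -/
def G (y : ℝ × Metric.sphere (0 : E3) 1 × Metric.sphere (0 : E3) 1) : H' :=
  ⟨Gm (y.1, (y.2.1 : E3), (y.2.2 : E3)),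
   Gm_mem (mem_sphere_zero_iff_norm.mp y.2.1.2) (mem_sphere_zero_iff_norm.mp y.2.2.2)⟩

set_option maxHeartbeats 4000000 in
lemma right_inv : Function.RightInverse G F := by
  rintro ⟨k, ⟨p, hp'⟩, ⟨q, hq'⟩⟩
  have hp : ‖p‖ = 1 := mem_sphere_zero_iff_norm.mp hp'
  have hq : ‖q‖ = 1 := mem_sphere_zero_iff_norm.mp hq'
  set t : ℝ := inner ℝ p q with htdef
  have ht : -1 ≤ t := t_ge hp hq
  have hs : 0 < tS k t := tS_pos k t ht
  have hsq : 0 < Real.sqrt (tS k t) := Real.sqrt_pos.mpr hs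
  have hss : (Real.sqrt (tS k t))⁻¹ ^ 2 = (tS k t)⁻¹ := by
    rw [inv_pow, Real.sq_sqrt hs.le]
  have ha : 0 < (Real.sqrt (tS k t))⁻¹ * 2 := by positivity
  have hupv : (Real.sqrt (tS k t))⁻¹ • (p + q) + (Real.sqrt (tS k t))⁻¹ • (p - q)
      = ((Real.sqrt (tS k t))⁻¹ * 2) • p := by module
  have humv : (Real.sqrt (tS k t))⁻¹ • (p + q) - (Real.sqrt (tS k t))⁻¹ • (p - q)
      = ((Real.sqrt (tS k t))⁻¹ * 2) • q := by module
  simp only [F, G, Gm, Prod.mk.injEq, Subtype.mk.injEq]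
  refine ⟨?_, ?_, ?_⟩
  · have h2 : ‖p + q‖ ^ 2 = 2 + 2 * t := by
      rw [norm_add_sq_real, hp, hq, htdef]; ring
    rw [norm_smul, mul_pow, Real.norm_eq_abs, abs_of_nonneg (by positivity), hss, h2]
    exact aux1 hs.ne'
  · rw [hupv]; exact unit_smul ha hp
  · rw [humv]; exact unit_smul ha hq

set_option maxHeartbeats 4000000 in
lemma left_inv : Function.LeftInverse G F := by
  rintro ⟨⟨c, e, h⟩, hx⟩
  have hce : (inner ℝ c e : ℝ) = 0 := hx.1
  have hcon : ‖e‖ ^ 2 - h * ‖c‖ ^ 2 = 1 := hx.2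
  have hN2 : ‖c + e‖ ^ 2 = ‖c‖ ^ 2 + ‖e‖ ^ 2 := norm_add_sq3 hce
  have hv2 : ‖c - e‖ ^ 2 = ‖c‖ ^ 2 + ‖e‖ ^ 2 := norm_sub_sq3 hce
  have hNpos : 0 < ‖c + e‖ := norm_pos_iff.mpr (add_ne hx)
  have hN2pos : 0 < ‖c + e‖ ^ 2 := by positivity
  have hNne : ‖c + e‖ ≠ 0 := hNpos.ne'
  have hveq : ‖c - e‖ = ‖c + e‖ := by
    rw [← Real.sqrt_sq (norm_nonneg (c - e)), hv2, ← hN2,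
      Real.sqrt_sq (norm_nonneg _)]
  apply Subtype.ext
  simp only [G, F, Gm]
  rw [hveq]
  have hec : (inner ℝ e c : ℝ) = 0 := by rw [real_inner_comm]; exact hce
  have hip : (inner ℝ (c + e) (c - e) : ℝ) = ‖c‖ ^ 2 - ‖e‖ ^ 2 := by
    rw [inner_sub_right, inner_add_left, inner_add_left,
      real_inner_self_eq_norm_sq, real_inner_self_eq_norm_sq]
    simp only [hce, hec]
    ring
  have ht : (inner ℝ (‖c + e‖⁻¹ • (c + e)) (‖c + e‖⁻¹ • (c - e)) : ℝ)
      = (‖c‖ ^ 2 - ‖e‖ ^ 2) / ‖c + e‖ ^ 2 := by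
    rw [real_inner_smul_left, real_inner_smul_right, hip, eq_div_iff hN2pos.ne']
    field_simp
  have hS : tS (h + ‖c‖ ^ 2) ((‖c‖ ^ 2 - ‖e‖ ^ 2) / ‖c + e‖ ^ 2)
      = 4 / ‖c + e‖ ^ 2 := tS_eval hN2 hN2pos hcon
  have hsq4 : Real.sqrt (4 / ‖c + e‖ ^ 2) = 2 / ‖c + e‖ := by
    rw [show (4 : ℝ) / ‖c + e‖ ^ 2 = (2 / ‖c + e‖) ^ 2 by ring,
      Real.sqrt_sq (by positivity)]
  rw [ht, hS, hsq4]
  simp only [Prod.mk.injEq]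
  have hsc : (2 / ‖c + e‖)⁻¹ * (‖c + e‖⁻¹ * 2) = 1 := by
    rw [inv_div]; field_simp
  refine ⟨?_, ?_, ?_⟩
  · have e1 : ‖c + e‖⁻¹ • (c + e) + ‖c + e‖⁻¹ • (c - e)
        = (‖c + e‖⁻¹ * 2) • c := by module
    rw [e1, smul_smul, hsc, one_smul]
  · have e2 : ‖c + e‖⁻¹ • (c + e) - ‖c + e‖⁻¹ • (c - e)
        = (‖c + e‖⁻¹ * 2) • e := by module
    rw [e2, smul_smul, hsc, one_smul]
  · field_simp
    linarith [hN2]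

set_option maxHeartbeats 4000000 in
lemma contF : Continuous F := by
  have hc : Continuous fun x : H' => (x : E3 × E3 × ℝ).1 := continuous_subtype_val.fst
  have he : Continuous fun x : H' => (x : E3 × E3 × ℝ).2.1 := continuous_subtype_val.snd.fst
  have hh : Continuous fun x : H' => (x : E3 × E3 × ℝ).2.2 := continuous_subtype_val.snd.snd
  have hu : Continuous fun x : H' => (x : E3 × E3 × ℝ).1 + (x : E3 × E3 × ℝ).2.1 := hc.add he
  have hv : Continuous fun x : H' => (x : E3 × E3 × ℝ).1 - (x : E3 × E3 × ℝ).2.1 := hc.sub he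
  refine Continuous.prodMk (hh.add (hc.norm.pow 2)) (Continuous.prodMk ?_ ?_)
  · exact Continuous.subtype_mk
      ((hu.norm.inv₀ fun x => norm_ne_zero_iff.mpr (add_ne x.2)).smul hu) _
  · exact Continuous.subtype_mk
      ((hv.norm.inv₀ fun x => norm_ne_zero_iff.mpr (sub_ne x.2)).smul hv) _

set_option maxHeartbeats 4000000 in
lemma contG : Continuous G := by
  have hk : Continuous fun y : ℝ × Metric.sphere (0 : E3) 1 × Metric.sphere (0 : E3) 1 =>
      y.1 := continuous_fst
  have hp : Continuous fun y : ℝ × Metric.sphere (0 : E3) 1 × Metric.sphere (0 : E3) 1 =>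
      (y.2.1 : E3) := continuous_subtype_val.comp (continuous_fst.comp continuous_snd)
  have hq : Continuous fun y : ℝ × Metric.sphere (0 : E3) 1 × Metric.sphere (0 : E3) 1 =>
      (y.2.2 : E3) := continuous_subtype_val.comp (continuous_snd.comp continuous_snd)
  have ht : Continuous fun y : ℝ × Metric.sphere (0 : E3) 1 × Metric.sphere (0 : E3) 1 =>
      (inner ℝ (y.2.1 : E3) (y.2.2 : E3) : ℝ) := hp.inner hq
  have htm1 : ∀ y : ℝ × Metric.sphere (0 : E3) 1 × Metric.sphere (0 : E3) 1,
      -1 ≤ (inner ℝ (y.2.1 : E3) (y.2.2 : E3) : ℝ) := fun y =>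
    t_ge (mem_sphere_zero_iff_norm.mp y.2.1.2) (mem_sphere_zero_iff_norm.mp y.2.2.2)
  have hA : Continuous fun y : ℝ × Metric.sphere (0 : E3) 1 × Metric.sphere (0 : E3) 1 =>
      tA y.1 (inner ℝ (y.2.1 : E3) (y.2.2 : E3) : ℝ) := by
    unfold tA; fun_prop
  have hS : Continuous fun y : ℝ × Metric.sphere (0 : E3) 1 × Metric.sphere (0 : E3) 1 =>
      tS y.1 (inner ℝ (y.2.1 : E3) (y.2.2 : E3) : ℝ) := by
    unfold tS
    exact hA.add ((hA.pow 2).add (continuous_const.mul ((continuous_const.add ht).pow 2))).sqrt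
  have hSpos : ∀ y : ℝ × Metric.sphere (0 : E3) 1 × Metric.sphere (0 : E3) 1,
      0 < tS y.1 (inner ℝ (y.2.1 : E3) (y.2.2 : E3) : ℝ) := fun y =>
    tS_pos _ _ (htm1 y)
  have hsqS : Continuous fun y : ℝ × Metric.sphere (0 : E3) 1 × Metric.sphere (0 : E3) 1 =>
      (Real.sqrt (tS y.1 (inner ℝ (y.2.1 : E3) (y.2.2 : E3) : ℝ)))⁻¹ :=
    hS.sqrt.inv₀ fun y => (Real.sqrt_pos.mpr (hSpos y)).ne'
  apply Continuous.subtype_mk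
  refine Continuous.prodMk (hsqS.smul (hp.add hq)) (Continuous.prodMk (hsqS.smul (hp.sub hq)) ?_)
  exact hk.sub ((continuous_const.mul (continuous_const.add ht)).div hS fun y => (hSpos y).ne')

end Stmt10
end

theorem stmt10 :
    Nonempty (H' ≃ₜ ℝ × Metric.sphere (0 : E3) 1 × Metric.sphere (0 : E3) 1) :=
  ⟨{ toFun := Stmt10.F, invFun := Stmt10.G,
     left_inv := Stmt10.left_inv, right_inv := Stmt10.right_inv,
     continuous_toFun := Stmt10.contF, continuous_invFun := Stmt10.contG }⟩
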